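/- For an integer n > 1 and every integer k with 0 ≤ k ≤ n−1, the coefficient of a^{2k} in the rescaled HOMFLY polynomial of the (n,n+1) torus knot equals P_s^k(T_{n,n+1}) = (−1)^k · q^{k(k+1)} · (1/[n−k]_{q²}) · binom_{q²}(n−1, k) · binom_{q²}(2n−k, n+1), as an identity in ℚ(q). -/

import Mathlib

/-!
Work in the field ℚ(q) of rational functions in one variable `q` over ℚ.
`qNum x j` is the q-integer `[j]_x = (1 - x^j)/(1 - x)`, `qFact x j` the q-factorial,
`qBinom x n k` the Gaussian binomial coefficient (all with base `x`, so that base `q^2`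
gives the `q²`-analogues).  `Ps n m` is the rescaled HOMFLY polynomial of the `(n,m)`
torus knot, a polynomial in the variable `a` (= `Polynomial.X`) over ℚ(q), given by
Jones' formula.
-/

noncomputable def q : RatFunc ℚ := RatFunc.X

noncomputable def qNum (x : RatFunc ℚ) (j : ℕ) : RatFunc ℚ := (1 - x ^ j) / (1 - x)

noncomputable def qFact (x : RatFunc ℚ) (j : ℕ) : RatFunc ℚ :=
  ∏ i ∈ Finset.range j, qNum x (i + 1)

noncomputable def qBinom (x : RatFunc ℚ) (n k : ℕ) : RatFunc ℚ :=
  qFact x n / (qFact x k * qFact x (n - k))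

/-- Jones' formula for the rescaled HOMFLY polynomial of the `(n,m)` torus knot,
as a polynomial in `a` (= `Polynomial.X`) over `ℚ(q)`. -/
noncomputable def Ps (n m : ℕ) : Polynomial (RatFunc ℚ) :=
  Polynomial.C ((1 - q ^ 2) / (1 - q ^ (2 * n))) *
    ∑ b ∈ Finset.range n,
      Polynomial.C (q ^ (2 * m * b)) *
        (∏ i ∈ Finset.range (n - 1 - b),
          Polynomial.C ((q ^ (2 * (i + 1)) - 1)⁻¹) *
            (Polynomial.C (q ^ (2 * (i + 1))) * Polynomial.X ^ 2 - 1)) *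
        ∏ j ∈ Finset.range b,
          Polynomial.C ((1 - q ^ (2 * (j + 1)))⁻¹) *
            (Polynomial.X ^ 2 - Polynomial.C (q ^ (2 * (j + 1))))

/-!
Write `Q = q²` and `t = a²`. The two products in each summand of Jones' formula are expanded by
Cauchy's `Q`-binomial theorem, and the coefficient of `t^j u^l` in
`∏_{i<j+l} (u - Q^(i+1) t) / (Q;Q)_{j+l}` is a function of `j` times a function of `l`.
Substituting `b = l + s` and `n - 1 - b = j + r` (so `j + l = k` and `r + s = n - 1 - k`), the
coefficient of `t^k` therefore splits into a product of two sums, each again a `Q`-binomial sum,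
evaluated at `(u, t) = (Q^m, 1)` and `(1, Q^m)`. For `m = n + 1` both products are quotients of
`Q`-Pochhammer symbols.
-/

open Finset Polynomial

section CommRing

variable {R : Type*} [CommRing R]

def qPochhammer (Q : R) (m : ℕ) : R := ∏ i ∈ range m, (1 - Q ^ (i + 1))

/-- `gaussianBinomial Q j l` is the Gaussian binomial coefficient `[j + l choose j]_Q`, indexed
symmetrically so that the `Q`-Pascal rule needs no subtraction. -/
def gaussianBinomial (Q : R) : ℕ → ℕ → R
  | 0, _ => 1
  | _ + 1, 0 => 1
  | j + 1, l + 1 => gaussianBinomial Q j (l + 1) + Q ^ (j + 1) * gaussianBinomial Q (j + 1) l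

variable (Q : R)

@[simp] lemma qPochhammer_zero : qPochhammer Q 0 = 1 := by simp [qPochhammer]

lemma qPochhammer_succ (m : ℕ) : qPochhammer Q (m + 1) = qPochhammer Q m * (1 - Q ^ (m + 1)) :=
  prod_range_succ _ _

lemma qPochhammer_add (m M : ℕ) :
    qPochhammer Q (m + M) = qPochhammer Q m * ∏ i ∈ range M, (1 - Q ^ (m + i + 1)) :=
  prod_range_add _ _ _

@[simp] lemma gaussianBinomial_zero_left (l : ℕ) : gaussianBinomial Q 0 l = 1 := by
  rw [gaussianBinomial]

@[simp] lemma gaussianBinomial_zero_right (j : ℕ) : gaussianBinomial Q j 0 = 1 := by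
  cases j <;> rw [gaussianBinomial]

lemma gaussianBinomial_succ_succ (j l : ℕ) :
    gaussianBinomial Q (j + 1) (l + 1) =
      gaussianBinomial Q j (l + 1) + Q ^ (j + 1) * gaussianBinomial Q (j + 1) l := by
  rw [gaussianBinomial]

lemma gaussianBinomial_mul_qPochhammer (j l : ℕ) :
    gaussianBinomial Q j l * qPochhammer Q j * qPochhammer Q l = qPochhammer Q (j + l) := by
  induction j generalizing l with
  | zero => simp
  | succ j ihj =>
    induction l with
    | zero => simp
    | succ l ihl =>
      have h₁ := ihj (l + 1)
      rw [show j + (l + 1) = j + l + 1 by ring, qPochhammer_succ Q l] at h₁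
      rw [show j + 1 + l = j + l + 1 by ring, qPochhammer_succ Q j] at ihl
      rw [gaussianBinomial_succ_succ, show j + 1 + (l + 1) = j + l + 1 + 1 by ring,
        qPochhammer_succ Q (j + l + 1), qPochhammer_succ Q j, qPochhammer_succ Q l]
      linear_combination (1 - Q ^ (j + 1)) * h₁ + Q ^ (j + 1) * (1 - Q ^ (l + 1)) * ihl

lemma map_gaussianBinomial {S : Type*} [CommRing S] (f : R →+* S) (j l : ℕ) :
    f (gaussianBinomial Q j l) = gaussianBinomial (f Q) j l := by
  induction j generalizing l with
  | zero => simp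
  | succ j ihj =>
    induction l with
    | zero => simp
    | succ l ihl => simp [gaussianBinomial_succ_succ, ihj, ihl]

/-- Cauchy's `Q`-binomial theorem, in homogeneous form. -/
theorem prod_range_add_pow_succ_mul (u t : R) (N : ℕ) :
    ∏ i ∈ range N, (u + Q ^ (i + 1) * t) =
      ∑ x ∈ antidiagonal N,
        Q ^ (x.1 + 1).choose 2 * gaussianBinomial Q x.1 x.2 * t ^ x.1 * u ^ x.2 := by
  induction N generalizing t with
  | zero => simp
  | succ N ih =>
    have hshift : ∀ i, u + Q ^ (i + 1 + 1) * t = u + Q ^ (i + 1) * (Q * t) := fun i => by ring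
    rw [prod_range_succ', funext hshift, ih, zero_add, pow_one, mul_add, sum_mul, sum_mul]
    set g : ℕ × ℕ → R := fun x =>
      Q ^ (x.1 + 1).choose 2 * gaussianBinomial Q x.1 x.2 * (Q * t) ^ x.1 * u ^ x.2
    -- `φ` and `ψ` are the two halves of each term on the right under the `Q`-Pascal rule.
    set φ : ℕ × ℕ → R := fun y => if y.2 = 0 then 0 else g (y.1, y.2 - 1) * u
    set ψ : ℕ × ℕ → R := fun y => if y.1 = 0 then 0 else g (y.1 - 1, y.2) * (Q * t)
    have hφ : ∑ y ∈ antidiagonal (N + 1), φ y = ∑ x ∈ antidiagonal N, g x * u := by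
      simp [φ, Nat.sum_antidiagonal_succ']
    have hψ : ∑ y ∈ antidiagonal (N + 1), ψ y = ∑ x ∈ antidiagonal N, g x * (Q * t) := by
      simp [ψ, Nat.sum_antidiagonal_succ]
    rw [← hφ, ← hψ, ← sum_add_distrib]
    refine sum_congr rfl fun y hy => ?_
    obtain ⟨j, l⟩ := y
    rcases j with _ | j <;> rcases l with _ | l
    · simp at hy
    · simp [φ, ψ, g, pow_succ]
    · simp only [φ, ψ, g, Nat.choose_succ_succ, Nat.choose_one_right, Nat.choose_zero_right,
        pow_add, pow_zero, pow_one, zero_add, mul_one, add_tsub_cancel_right, Nat.add_eq_zero_iff,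
        one_ne_zero, and_false, if_true, if_false, gaussianBinomial_zero_right]
      ring
    · simp only [φ, ψ, g, gaussianBinomial_succ_succ, Nat.choose_succ_succ, Nat.choose_one_right,
        Nat.choose_zero_right, pow_add, pow_one, add_tsub_cancel_right, Nat.add_eq_zero_iff,
        one_ne_zero, and_false, if_false]
      ring

theorem prod_range_sub_pow_succ_mul (u t : R) (N : ℕ) :
    ∏ i ∈ range N, (u - Q ^ (i + 1) * t) =
      ∑ x ∈ antidiagonal N,
        (-1) ^ x.1 * Q ^ (x.1 + 1).choose 2 * gaussianBinomial Q x.1 x.2 * t ^ x.1 * u ^ x.2 := by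
  simp_rw [sub_eq_add_neg, ← mul_neg, prod_range_add_pow_succ_mul, neg_pow t]
  exact sum_congr rfl fun _ _ => by ring

lemma prod_range_pow_sub_pow_succ (c k : ℕ) :
    ∏ i ∈ range k, (Q ^ (k + c + 1) - Q ^ (i + 1)) =
      (-1) ^ k * Q ^ (k + 1).choose 2 * ∏ i ∈ range k, (1 - Q ^ (c + i + 1)) := by
  induction k with
  | zero => simp
  | succ k ih =>
    have hshift : ∀ i, Q ^ (k + 1 + c + 1) - Q ^ (i + 1 + 1) =
        Q * (Q ^ (k + c + 1) - Q ^ (i + 1)) := fun i => by ring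
    rw [prod_range_succ', funext hshift, prod_mul_distrib, ih, prod_const, card_range,
      prod_range_succ, Nat.choose_succ_succ (k + 1), Nat.choose_one_right]
    ring

lemma pow_mul_succ_eq_sq_pow_choose_two (k : ℕ) :
    Q ^ (k * (k + 1)) = (Q ^ 2) ^ (k + 1).choose 2 := by
  rw [← pow_mul, Nat.choose_two_right, Nat.mul_div_cancel' (Nat.even_mul_pred_self _).two_dvd,
    Nat.add_sub_cancel, mul_comm]

lemma coeff_sum_antidiagonal_C_mul_X_pow (f : ℕ × ℕ → R) (N j : ℕ) :
    (∑ x ∈ antidiagonal N, C (f x) * X ^ x.1).coeff j =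
      if j ≤ N then f (j, N - j) else 0 := by
  rw [Nat.sum_antidiagonal_eq_sum_range_succ_mk, finsetSum_coeff]
  simp

end CommRing

lemma sum_antidiagonal_sum_antidiagonal_ite_le {M : Type*} [AddCommMonoid M]
    (F : ℕ × ℕ → ℕ × ℕ → M) (k n : ℕ) :
    ∑ p ∈ antidiagonal (k + n), ∑ i ∈ antidiagonal k, (if i ≤ p then F i (p - i) else 0) =
      ∑ i ∈ antidiagonal k, ∑ d ∈ antidiagonal n, F i d := by
  rw [sum_comm]
  refine sum_congr rfl fun i hi => ?_
  rw [HasAntidiagonal.mem_antidiagonal] at hi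
  rw [← sum_filter]
  refine sum_nbij' (· - i) (i + ·) ?_ ?_ ?_ ?_ ?_ <;>
    simp only [mem_filter, HasAntidiagonal.mem_antidiagonal, Prod.le_def, Prod.fst_sub,
      Prod.snd_sub, Prod.fst_add, Prod.snd_add, Prod.ext_iff] <;>
    intros <;> first | omega | simp

section Field

variable {K : Type*} [Field K]

def cauchyCoeff (Q : K) (j l : ℕ) : K :=
  (-1) ^ j * Q ^ (j + 1).choose 2 / (qPochhammer Q j * qPochhammer Q l)

lemma cauchyCoeff_mul_cauchyCoeff_comm (Q : K) (j l j' l' : ℕ) :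
    cauchyCoeff Q j l * cauchyCoeff Q j' l' = cauchyCoeff Q j' l * cauchyCoeff Q j l' := by
  simp only [cauchyCoeff]
  ring

variable {Q : K} (hQ : ∀ i, Q ^ (i + 1) ≠ 1)
include hQ

lemma qPochhammer_ne_zero (m : ℕ) : qPochhammer Q m ≠ 0 :=
  prod_ne_zero_iff.2 fun i _ => sub_ne_zero.2 (hQ i).symm

lemma gaussianBinomial_eq_div (j l : ℕ) :
    gaussianBinomial Q j l = qPochhammer Q (j + l) / (qPochhammer Q j * qPochhammer Q l) := by
  rw [← gaussianBinomial_mul_qPochhammer, mul_assoc,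
    mul_div_cancel_right₀ _ (mul_ne_zero (qPochhammer_ne_zero hQ j) (qPochhammer_ne_zero hQ l))]

lemma prod_range_one_sub_pow_eq_div (m M : ℕ) :
    ∏ i ∈ range M, (1 - Q ^ (m + i + 1)) = qPochhammer Q (m + M) / qPochhammer Q m := by
  rw [qPochhammer_add, mul_div_cancel_left₀ _ (qPochhammer_ne_zero hQ m)]

lemma sum_cauchyCoeff_mul (u t : K) (N : ℕ) :
    ∑ x ∈ antidiagonal N, cauchyCoeff Q x.1 x.2 * t ^ x.1 * u ^ x.2 =
      (∏ i ∈ range N, (u - Q ^ (i + 1) * t)) / qPochhammer Q N := by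
  rw [prod_range_sub_pow_succ_mul, sum_div]
  refine sum_congr rfl fun x hx => ?_
  rw [cauchyCoeff, gaussianBinomial_eq_div hQ, mem_antidiagonal.1 hx]
  have := qPochhammer_ne_zero hQ N
  field_simp

lemma prod_range_C_inv_mul_sub_C_pow_succ_mul (u t : K[X]) (N : ℕ) :
    ∏ i ∈ range N, C (1 - Q ^ (i + 1))⁻¹ * (u - C (Q ^ (i + 1)) * t) =
      ∑ x ∈ antidiagonal N, C (cauchyCoeff Q x.1 x.2) * t ^ x.1 * u ^ x.2 := by
  simp_rw [prod_mul_distrib, ← map_prod, prod_inv_distrib, map_pow, prod_range_sub_pow_succ_mul,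
    mul_sum]
  refine sum_congr rfl fun x hx => ?_
  have hcoeff : (qPochhammer Q N)⁻¹ *
      ((-1) ^ x.1 * Q ^ (x.1 + 1).choose 2 * gaussianBinomial Q x.1 x.2) =
        cauchyCoeff Q x.1 x.2 := by
    rw [cauchyCoeff, gaussianBinomial_eq_div hQ, mem_antidiagonal.1 hx]
    have := qPochhammer_ne_zero hQ N
    field_simp
  rw [← hcoeff, ← map_gaussianBinomial]
  simp only [qPochhammer, map_mul, map_pow, map_neg, map_one]
  ring

lemma coeff_prod_range_C_inv_mul_C_pow_mul_X_sub_one (N j : ℕ) :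
    (∏ i ∈ range N, C ((Q ^ (i + 1) - 1)⁻¹) * (C (Q ^ (i + 1)) * X - 1)).coeff j =
      if j ≤ N then cauchyCoeff Q j (N - j) else 0 := by
  have hfactor : ∀ i, C ((Q ^ (i + 1) - 1)⁻¹) * (C (Q ^ (i + 1)) * X - 1) =
      C (1 - Q ^ (i + 1))⁻¹ * (1 - C (Q ^ (i + 1)) * X) := fun i => by
    rw [← neg_sub 1 (Q ^ (i + 1)), inv_neg, map_neg]
    ring
  simp_rw [hfactor, prod_range_C_inv_mul_sub_C_pow_succ_mul hQ 1 X, one_pow, mul_one]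
  exact coeff_sum_antidiagonal_C_mul_X_pow _ _ _

lemma coeff_prod_range_C_inv_mul_X_sub_C_pow (b l : ℕ) :
    (∏ i ∈ range b, C ((1 - Q ^ (i + 1))⁻¹) * (X - C (Q ^ (i + 1)))).coeff l =
      if l ≤ b then cauchyCoeff Q (b - l) l else 0 := by
  have hfactor : ∀ i, C ((1 - Q ^ (i + 1))⁻¹) * (X - C (Q ^ (i + 1))) =
      C (1 - Q ^ (i + 1))⁻¹ * (X - C (Q ^ (i + 1)) * 1) := fun i => by rw [mul_one]
  simp_rw [hfactor, prod_range_C_inv_mul_sub_C_pow_succ_mul hQ X 1, one_pow, mul_one,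
    ← Nat.sum_antidiagonal_swap (f := fun x => C (cauchyCoeff Q x.1 x.2) * X ^ x.2),
    Prod.fst_swap, Prod.snd_swap]
  exact coeff_sum_antidiagonal_C_mul_X_pow (fun x => cauchyCoeff Q x.2 x.1) _ _

end Field

section Jones

variable {K : Type*} [Field K]

noncomputable def jonesSum (Q : K) (n m : ℕ) : K[X] :=
  ∑ b ∈ range n, C (Q ^ (m * b)) *
    (∏ i ∈ range (n - 1 - b), C ((Q ^ (i + 1) - 1)⁻¹) * (C (Q ^ (i + 1)) * X - 1)) *
    ∏ j ∈ range b, C ((1 - Q ^ (j + 1))⁻¹) * (X - C (Q ^ (j + 1)))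

variable {Q : K} (hQ : ∀ i, Q ^ (i + 1) ≠ 1)
include hQ

theorem coeff_jonesSum (k M m : ℕ) :
    (jonesSum Q (k + M + 1) m).coeff k =
      (∏ i ∈ range k, (Q ^ m - Q ^ (i + 1))) / qPochhammer Q k *
        ((∏ i ∈ range M, (1 - Q ^ (m + i + 1))) / qPochhammer Q M) := by
  set F : ℕ × ℕ → ℕ × ℕ → K := fun i d =>
    cauchyCoeff Q i.2 i.1 * (Q ^ m) ^ i.1 * (cauchyCoeff Q d.1 d.2 * (Q ^ m) ^ d.1)
  have hcoeff : (jonesSum Q (k + M + 1) m).coeff k =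
      ∑ p ∈ antidiagonal (k + M), ∑ i ∈ antidiagonal k,
        if i ≤ p then F i (p - i) else 0 := by
    rw [Nat.sum_antidiagonal_eq_sum_range_succ_mk, jonesSum, finsetSum_coeff]
    refine sum_congr rfl fun b _ => ?_
    rw [mul_assoc, coeff_C_mul, mul_comm (∏ i ∈ range _, _), coeff_mul, mul_sum,
      show k + M + 1 - 1 - b = k + M - b by omega]
    refine sum_congr rfl fun i _ => ?_
    rw [coeff_prod_range_C_inv_mul_X_sub_C_pow hQ,
      coeff_prod_range_C_inv_mul_C_pow_mul_X_sub_one hQ, ite_zero_mul_ite_zero, mul_ite_zero]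
    refine ite_congr (by simp only [Prod.le_def]) (fun hi => ?_) fun _ => rfl
    have hpow : Q ^ (m * b) = (Q ^ m) ^ i.1 * (Q ^ m) ^ (b - i.1) := by
      rw [← pow_add, Nat.add_sub_cancel' hi.1, pow_mul]
    rw [hpow, cauchyCoeff_mul_cauchyCoeff_comm]
    simp only [F, Prod.fst_sub, Prod.snd_sub]
    ring
  have h₁ := sum_cauchyCoeff_mul hQ (Q ^ m) 1 k
  have h₂ := sum_cauchyCoeff_mul hQ 1 (Q ^ m) M
  simp only [one_pow, mul_one] at h₁ h₂
  rw [hcoeff, sum_antidiagonal_sum_antidiagonal_ite_le, ← sum_mul_sum,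
    ← Nat.sum_antidiagonal_swap]
  simp only [Prod.fst_swap, Prod.snd_swap]
  rw [h₁, h₂]
  simp only [← pow_add, add_comm _ m, ← add_assoc]

theorem coeff_jonesSum_succ (k M : ℕ) :
    (jonesSum Q (k + M + 1) (k + M + 1 + 1)).coeff k =
      (-1) ^ k * Q ^ (k + 1).choose 2 * gaussianBinomial Q k (M + 1) *
        gaussianBinomial Q (k + M + 2) M := by
  rw [coeff_jonesSum hQ, show k + M + 1 + 1 = k + (M + 1) + 1 by ring,
    prod_range_pow_sub_pow_succ, prod_range_one_sub_pow_eq_div hQ,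
    prod_range_one_sub_pow_eq_div hQ, gaussianBinomial_eq_div hQ, gaussianBinomial_eq_div hQ,
    add_comm (M + 1) k, show k + (M + 1) + 1 = k + M + 2 by ring]
  have := qPochhammer_ne_zero hQ
  field_simp

end Jones

lemma q_sq_pow_ne_one (i : ℕ) : (q ^ 2) ^ (i + 1) ≠ 1 := by
  rw [← pow_mul, q, ← RatFunc.algebraMap_X, ← map_pow, Ne,
    ← map_one (algebraMap ℚ[X] (RatFunc ℚ)), (RatFunc.algebraMap_injective ℚ).eq_iff]
  intro h
  simpa using congrArg natDegree h

lemma qFact_eq_div (x : RatFunc ℚ) (m : ℕ) : qFact x m = qPochhammer x m / (1 - x) ^ m := by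
  simp only [qFact, qNum, prod_div_distrib, prod_const, card_range, qPochhammer]

lemma qBinom_add_eq_gaussianBinomial {x : RatFunc ℚ} (hx : ∀ i, x ^ (i + 1) ≠ 1) (j l : ℕ) :
    qBinom x (j + l) j = gaussianBinomial x j l := by
  have h₁ : 1 - x ≠ 0 := sub_ne_zero.2 (by simpa using (hx 0).symm)
  have := qPochhammer_ne_zero hx
  rw [qBinom, Nat.add_sub_cancel_left, qFact_eq_div, qFact_eq_div, qFact_eq_div, pow_add,
    gaussianBinomial_eq_div hx]
  field_simp

lemma Ps_eq_C_mul_expand_jonesSum (n m : ℕ) :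
    Ps n m =
      C ((1 - q ^ 2) / (1 - q ^ (2 * n))) * expand (RatFunc ℚ) 2 (jonesSum (q ^ 2) n m) := by
  simp only [Ps, jonesSum, map_sum, map_mul, map_prod, map_sub, map_one, expand_C, expand_X,
    ← pow_mul, mul_assoc]

/-- For `n > 1` and `0 ≤ k ≤ n-1`, the coefficient of `a^{2k}` of the rescaled HOMFLY
polynomial of the `(n,n+1)` torus knot equals
`(-1)^k q^{k(k+1)} (1/[n-k]_{q²}) binom_{q²}(n-1,k) binom_{q²}(2n-k, n+1)`. -/
theorem coeff_Ps_succ (n k : ℕ) (hn : 1 < n) (hk : k ≤ n - 1) :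
    (Ps n (n + 1)).coeff (2 * k) =
      (-1) ^ k * q ^ (k * (k + 1)) * (1 / qNum (q ^ 2) (n - k)) *
        qBinom (q ^ 2) (n - 1) k * qBinom (q ^ 2) (2 * n - k) (n + 1) := by
  obtain ⟨M, rfl⟩ : ∃ M, n = k + M + 1 := ⟨n - 1 - k, by omega⟩
  have hQ := q_sq_pow_ne_one
  rw [Ps_eq_C_mul_expand_jonesSum, coeff_C_mul, coeff_expand_mul' two_pos,
    coeff_jonesSum_succ hQ, show k + M + 1 - k = M + 1 by omega,
    show k + M + 1 - 1 = k + M by omega, show 2 * (k + M + 1) - k = k + M + 2 + M by omega,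
    qBinom_add_eq_gaussianBinomial hQ, qBinom_add_eq_gaussianBinomial hQ, qNum, pow_mul,
    pow_mul_succ_eq_sq_pow_choose_two, gaussianBinomial_eq_div hQ k,
    gaussianBinomial_eq_div hQ k, show k + (M + 1) = k + M + 1 by ring,
    qPochhammer_succ _ (k + M), qPochhammer_succ _ M]
  have := qPochhammer_ne_zero hQ
  have hsub : ∀ i, 1 - (q ^ 2) ^ (i + 1) ≠ 0 := fun i => sub_ne_zero.2 (hQ i).symm
  have := hsub M
  have := hsub (k + M)
  field_simp
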